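/- arXiv:2003.01571 — 3 statements merged into one kernel-verified Lean document; each statement's English description precedes it below -/
import Mathlib

section
/- For every m ≥ 1 there exists a 1-perfect bitrade (T_0, T_1) in the Hamming graph H(3m+1, 3) of size |T_0| + |T_1| = 2^{m+1} · 3^{m}. -/
/-!
Encode a bitrade `(T₀, T₁)` as a set `S` with a sign `σ : S → ZMod 2`, `Tᵢ = σ⁻¹ i`: every
closed ball meets `S` in nothing or in two points of opposite sign. Suppose `P` in a graph `H`
satisfies this condition at points outside `P`, while every point of `P` is the only point of `P`
in its ball. Then, in `G □ H`, the ball of `(v, w)` meets `S ×ˢ P` in `(B(v) ∩ S) × {w}` if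
`w ∈ P` and in `({v} ∩ S) × (B(w) ∩ P)` otherwise, so `S ×ˢ P` with the summed sign is again a
bitrade. In `H(3,3)` the six permutations of `{0,1,2}` with their parity form such a `P`, and
`{0,1}` is a bitrade of size 2 in `H(1,3)`; since `H(3m+1,3) = H(1,3) □ H(3,3)^m`, this gives a
bitrade of size `2 · 6^m`.
-/

/-- `(T0, T1)` is a 1-perfect bitrade in the graph `G`: `T0` and `T1` are disjoint nonempty
vertex sets such that for every vertex `x`, the closed ball `B(x) = N(x) ∪ {x}` either
contains exactly one element of `T0` and exactly one element of `T1`, or contains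
no element of `T0 ∪ T1`. -/
def IsPerfectBitrade {V : Type*} (G : SimpleGraph V) (T0 T1 : Set V) : Prop :=
  T0.Nonempty ∧ T1.Nonempty ∧ Disjoint T0 T1 ∧
  ∀ x : V,
    ((∃! y, (y ∈ G.neighborSet x ∪ {x}) ∧ y ∈ T0) ∧
     (∃! y, (y ∈ G.neighborSet x ∪ {x}) ∧ y ∈ T1)) ∨
    (∀ y ∈ G.neighborSet x ∪ {x}, y ∉ T0 ∪ T1)

/-- The Hamming graph `H(n,q)`: vertices are words of length `n` over `Σ_q`,
adjacent iff they differ in exactly one coordinate. -/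
def hammingGraph (n q : ℕ) : SimpleGraph (Fin n → Fin q) where
  Adj x y := hammingDist x y = 1
  symm := ⟨fun x y h => by rwa [hammingDist_comm]⟩
  loopless := ⟨fun x h => by simp [hammingDist_self] at h⟩

open Set

namespace SimpleGraph

variable {V W : Type*}

def closedNeighborSet (G : SimpleGraph V) (v : V) : Set V := G.neighborSet v ∪ {v}

lemma mem_closedNeighborSet_self (G : SimpleGraph V) (v : V) : v ∈ G.closedNeighborSet v :=
  Or.inr rfl

lemma closedNeighborSet_boxProd (G : SimpleGraph V) (H : SimpleGraph W) (v : V) (w : W) :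
    (G □ H).closedNeighborSet (v, w) =
      G.closedNeighborSet v ×ˢ {w} ∪ {v} ×ˢ H.closedNeighborSet w := by
  ext ⟨v', w'⟩
  simp only [closedNeighborSet, boxProd_adj, mem_union, mem_neighborSet, mem_singleton_iff,
    mem_prod, Prod.mk.injEq]
  tauto

lemma Iso.closedNeighborSet_apply {G : SimpleGraph V} {G' : SimpleGraph W} (e : G ≃g G')
    (v : V) : G'.closedNeighborSet (e v) = e '' G.closedNeighborSet v := by
  ext w
  obtain ⟨v', rfl⟩ := e.surjective w
  simp [closedNeighborSet, e.injective.eq_iff, e.map_adj_iff]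

lemma closedNeighborSet_inter_eq_coe_filter [Fintype V] [DecidableEq V] (G : SimpleGraph V)
    [DecidableRel G.Adj] (S : Set V) [DecidablePred (· ∈ S)] (v : V) :
    G.closedNeighborSet v ∩ S = ↑(Finset.univ.filter fun w => (G.Adj v w ∨ w = v) ∧ w ∈ S) := by
  ext w
  simp [closedNeighborSet, or_comm]

end SimpleGraph

open SimpleGraph

variable {V W : Type*}

def IsEmptyOrSignedPair (A : Set V) (σ : V → ZMod 2) : Prop :=
  A = ∅ ∨ ∃ a b, σ a ≠ σ b ∧ A = {a, b}

namespace IsEmptyOrSignedPair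

variable {A : Set V} {σ : V → ZMod 2}

lemma prod_singleton (h : IsEmptyOrSignedPair A σ) (w : W) (τ : W → ZMod 2) :
    IsEmptyOrSignedPair (A ×ˢ {w}) fun p => σ p.1 + τ p.2 := by
  rcases h with rfl | ⟨a, b, hab, rfl⟩
  · exact Or.inl empty_prod
  · refine Or.inr ⟨(a, w), (b, w), by simpa using hab, ?_⟩
    rw [insert_prod, singleton_prod_singleton, image_singleton]
    rfl

lemma singleton_prod (h : IsEmptyOrSignedPair A σ) (w : W) (τ : W → ZMod 2) :
    IsEmptyOrSignedPair ({w} ×ˢ A) fun p => τ p.1 + σ p.2 := by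
  rcases h with rfl | ⟨a, b, hab, rfl⟩
  · exact Or.inl prod_empty
  · refine Or.inr ⟨(w, a), (w, b), by simpa using hab, ?_⟩
    rw [prod_insert, singleton_prod_singleton, image_singleton]
    rfl

lemma image {σ' : W → ZMod 2} (h : IsEmptyOrSignedPair A σ) (f : V → W) (hf : σ' ∘ f = σ) :
    IsEmptyOrSignedPair (f '' A) σ' := by
  rcases h with rfl | ⟨a, b, hab, rfl⟩
  · exact Or.inl (image_empty f)
  · refine Or.inr ⟨f a, f b, by simpa [← hf] using hab, image_pair f a b⟩

lemma existsUnique_sign (h : IsEmptyOrSignedPair A σ) (hne : A.Nonempty) (s : ZMod 2) :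
    ∃! a, a ∈ A ∧ σ a = s := by
  obtain ⟨a, b, hab, rfl⟩ := h.resolve_left hne.ne_empty
  have two_values : ∀ x y z : ZMod 2, x ≠ y → z = x ∨ z = y := by decide
  rcases two_values _ _ s hab with rfl | rfl
  · exact ⟨a, by simp, by rintro c ⟨rfl | rfl, hc⟩ <;> simp_all⟩
  · exact ⟨b, by simp, by rintro c ⟨rfl | rfl, hc⟩ <;> simp_all⟩

lemma of_finset [DecidableEq V] {F : Finset V}
    (h : F = ∅ ∨ ∃ a ∈ F, ∃ b ∈ F, σ a ≠ σ b ∧ F = {a, b}) : IsEmptyOrSignedPair (F : Set V) σ := by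
  rcases h with rfl | ⟨a, -, b, -, hab, rfl⟩
  · exact Or.inl Finset.coe_empty
  · exact Or.inr ⟨a, b, hab, Finset.coe_pair⟩

end IsEmptyOrSignedPair

def IsSignedBitrade (G : SimpleGraph V) (S : Set V) (σ : V → ZMod 2) : Prop :=
  ∀ v, IsEmptyOrSignedPair (G.closedNeighborSet v ∩ S) σ

def IsBitradeFactor (H : SimpleGraph W) (P : Set W) (τ : W → ZMod 2) : Prop :=
  (∀ w ∈ P, H.closedNeighborSet w ∩ P = {w}) ∧
    ∀ w ∉ P, IsEmptyOrSignedPair (H.closedNeighborSet w ∩ P) τ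

namespace IsSignedBitrade

variable {G : SimpleGraph V} {S : Set V} {σ : V → ZMod 2}

theorem boxProd (hS : IsSignedBitrade G S σ) {H : SimpleGraph W} {P : Set W} {τ : W → ZMod 2}
    (hP : IsBitradeFactor H P τ) :
    IsSignedBitrade (G □ H) (S ×ˢ P) fun p => σ p.1 + τ p.2 := by
  rintro ⟨v, w⟩
  rw [closedNeighborSet_boxProd, union_inter_distrib_right, prod_inter_prod, prod_inter_prod]
  by_cases hw : w ∈ P
  · have hsub : {v} ∩ S ⊆ G.closedNeighborSet v ∩ S :=
      inter_subset_inter_left S (singleton_subset_iff.2 (G.mem_closedNeighborSet_self v))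
    rw [hP.1 w hw, singleton_inter_of_mem hw, union_eq_left.2 (prod_mono hsub subset_rfl)]
    exact (hS v).prod_singleton w τ
  · rw [singleton_inter_eq_empty.2 hw, prod_empty, empty_union]
    by_cases hv : v ∈ S
    · rw [singleton_inter_of_mem hv]
      exact (hP.2 w hw).singleton_prod v σ
    · rw [singleton_inter_eq_empty.2 hv, empty_prod]
      exact Or.inl rfl

theorem map (hS : IsSignedBitrade G S σ) {G' : SimpleGraph W} (e : G ≃g G') :
    IsSignedBitrade G' (e '' S) (σ ∘ e.symm) := by
  intro w
  obtain ⟨v, rfl⟩ := e.surjective w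
  rw [e.closedNeighborSet_apply, ← image_inter e.injective]
  exact (hS v).image e (by ext; simp)

theorem isPerfectBitrade (hS : IsSignedBitrade G S σ) (hne : S.Nonempty) :
    IsPerfectBitrade G {v ∈ S | σ v = 0} {v ∈ S | σ v = 1} := by
  have mem_sep (s : ZMod 2) (v w : V) :
      w ∈ G.closedNeighborSet v ∧ w ∈ {v ∈ S | σ v = s} ↔
        w ∈ G.closedNeighborSet v ∩ S ∧ σ w = s := and_assoc.symm
  have exists_sign (s : ZMod 2) : ∃ v ∈ S, σ v = s := by
    obtain ⟨v, hv⟩ := hne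
    obtain ⟨w, ⟨hw, hws⟩, -⟩ := (hS v).existsUnique_sign ⟨v, G.mem_closedNeighborSet_self v, hv⟩ s
    exact ⟨w, hw.2, hws⟩
  refine ⟨exists_sign 0, exists_sign 1, ?_, fun v => ?_⟩
  · exact disjoint_left.2 fun v h0 h1 => zero_ne_one (h0.2.symm.trans h1.2)
  · rcases (G.closedNeighborSet v ∩ S).eq_empty_or_nonempty with hempty | hball
    · refine Or.inr fun w hw hwT => ?_
      have hwS : w ∈ S := hwT.elim (·.1) (·.1)
      exact (eq_empty_iff_forall_notMem.1 hempty) w ⟨hw, hwS⟩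
    · exact Or.inl ⟨(existsUnique_congr (mem_sep 0 v)).2 ((hS v).existsUnique_sign hball 0),
        (existsUnique_congr (mem_sep 1 v)).2 ((hS v).existsUnique_sign hball 1)⟩

end IsSignedBitrade

lemma ncard_sep_zero_add_ncard_sep_one (S : Set V) (hS : S.Finite) (σ : V → ZMod 2) :
    {v ∈ S | σ v = 0}.ncard + {v ∈ S | σ v = 1}.ncard = S.ncard := by
  have two_values : ∀ x : ZMod 2, x = 0 ∨ x = 1 := by decide
  rw [← ncard_union_eq (disjoint_left.2 fun v h0 h1 => zero_ne_one (h0.2.symm.trans h1.2))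
    (hS.subset (sep_subset S _)) (hS.subset (sep_subset S _))]
  congr 1
  ext v
  simp only [mem_union, mem_sep_iff, ← and_or_left, two_values, and_true]

instance (n q : ℕ) : DecidableRel (hammingGraph n q).Adj :=
  fun x y => inferInstanceAs (Decidable (hammingDist x y = 1))

lemma hammingDist_append {n k q : ℕ} (a c : Fin n → Fin q) (b d : Fin k → Fin q) :
    hammingDist (Fin.append a b) (Fin.append c d) = hammingDist a c + hammingDist b d := by
  simp only [hammingDist, Finset.card_filter, Fin.sum_univ_add, Fin.append_left, Fin.append_right]

def hammingGraphAppendIso (n k q : ℕ) :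
    (hammingGraph n q).boxProd (hammingGraph k q) ≃g hammingGraph (n + k) q where
  toEquiv := Fin.appendEquiv n k
  map_rel_iff' {p p'} := by
    change hammingDist (Fin.append p.1 p.2) (Fin.append p'.1 p'.2) = 1 ↔
      hammingDist p.1 p'.1 = 1 ∧ p.2 = p'.2 ∨ hammingDist p.2 p'.2 = 1 ∧ p.1 = p'.1
    rw [hammingDist_append, ← hammingDist_eq_zero (x := p.2), ← hammingDist_eq_zero (x := p.1)]
    omega

lemma closedNeighborSet_hammingGraph_one (q : ℕ) (v : Fin 1 → Fin q) :
    (hammingGraph 1 q).closedNeighborSet v = univ := by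
  refine eq_univ_of_forall fun w => (eq_or_ne v w).elim (fun h => Or.inr h.symm) fun h => Or.inl ?_
  have := hammingDist_le_card_fintype (x := v) (y := w)
  have := hammingDist_pos.2 h
  simp only [Fintype.card_fin] at *
  change hammingDist v w = 1
  omega

lemma isSignedBitrade_hammingGraph_one {q : ℕ} {a b : Fin 1 → Fin q} (hab : a ≠ b) :
    IsSignedBitrade (hammingGraph 1 q) {a, b} fun v => if v = a then 0 else 1 := by
  intro v
  rw [closedNeighborSet_hammingGraph_one, univ_inter]
  exact Or.inr ⟨a, b, by simp [hab.symm], rfl⟩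

-- For injective `t` this is the parity of `t` as a permutation.
def permSign (t : Fin 3 → Fin 3) : ZMod 2 := if t 1 = t 0 + 1 then 0 else 1

lemma isBitradeFactor_injective :
    IsBitradeFactor (hammingGraph 3 3) {t | t.Injective} permSign := by
  refine ⟨fun t ht => ?_, fun t ht => ?_⟩ <;> rw [closedNeighborSet_inter_eq_coe_filter]
  · rw [Finset.coe_eq_singleton]
    revert t
    decide
  · refine IsEmptyOrSignedPair.of_finset ?_
    revert t
    decide

lemma ncard_injective_fin_three : {t : Fin 3 → Fin 3 | t.Injective}.ncard = 6 := by
  rw [ncard_eq_toFinset_card']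
  decide

theorem exists_isSignedBitrade_hammingGraph (m : ℕ) :
    ∃ S σ, IsSignedBitrade (hammingGraph (3 * m + 1) 3) S σ ∧ S.ncard = 2 * 6 ^ m := by
  induction m with
  | zero =>
    have h01 : (fun _ => 0 : Fin 1 → Fin 3) ≠ fun _ => 1 := fun h => by simpa using congrFun h 0
    exact ⟨_, _, isSignedBitrade_hammingGraph_one h01, ncard_pair h01⟩
  | succ m ih =>
    obtain ⟨S, σ, hS, hcard⟩ := ih
    rw [show 3 * (m + 1) + 1 = 3 * m + 1 + 3 by ring]
    refine ⟨_, _, (hS.boxProd isBitradeFactor_injective).map (hammingGraphAppendIso _ _ _), ?_⟩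
    rw [ncard_image_of_injective _ (hammingGraphAppendIso _ _ _).injective, ncard_prod, hcard,
      ncard_injective_fin_three, pow_succ, mul_assoc]

theorem stmt13_general (m : ℕ) :
    ∃ T0 T1 : Set (Fin (3 * m + 1) → Fin 3),
      IsPerfectBitrade (hammingGraph (3 * m + 1) 3) T0 T1 ∧
      T0.ncard + T1.ncard = 2 ^ (m + 1) * 3 ^ m := by
  obtain ⟨S, σ, hS, hcard⟩ := exists_isSignedBitrade_hammingGraph m
  refine ⟨_, _, hS.isPerfectBitrade (nonempty_of_ncard_ne_zero (by rw [hcard]; positivity)), ?_⟩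
  rw [ncard_sep_zero_add_ncard_sep_one S S.toFinite, hcard, show 6 = 2 * 3 by rfl, mul_pow]
  ring

/-- For every `m ≥ 1` there is a 1-perfect bitrade in `H(3m+1,3)` of size `2^{m+1} · 3^m`. -/
theorem stmt13 (m : ℕ) (hm : 1 ≤ m) :
    ∃ T0 T1 : Set (Fin (3 * m + 1) → Fin 3),
      IsPerfectBitrade (hammingGraph (3 * m + 1) 3) T0 T1 ∧
      T0.ncard + T1.ncard = 2 ^ (m + 1) * 3 ^ m :=
  stmt13_general m
end

section
/- Let q ≥ 2, n ≥ 1, 1 ≤ i ≤ j ≤ n, let f : Σ_q^n → ℝ belong to U_{[i,j]}(n,q), and let r ∈ {1,…,n}. Then: (1) for all k, m ∈ Σ_q, the function f_k^r − f_m^r belongs to U_{[i−1,j−1]}(n−1,q); (2) Σ_{k=0}^{q−1} f_k^r belongs to U_{[i,j]}(n−1,q) provided j ≤ n−1 (and to U_{[i,n−1]}(n−1,q) in general); (3) for every k ∈ Σ_q, the function f_k^r belongs to U_{[i−1,j]}(n−1,q) if j ≤ n−1, and to U_{[i−1,n−1]}(n−1,q) if j = n. -/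
/-!
Split a vertex of `H(n+1,q)` as `(b, x)`, `b` being its `r`-th coordinate. The neighbours of
`(a, x)` are the `q - 1` vertices `(b, x)` with `b ≠ a` and the vertices `(a, z)` with `z ~ x`,
so an eigenfunction `f` with eigenvalue `μ` satisfies `A f_a = μ f_a - Σ_b f_b + f_a`. Hence
`f_a - f_b` is an eigenfunction of `H(n,q)` for `μ + 1` and `Σ_b f_b` one for `μ - (q - 1)`:
`λ_k(n+1)` moves to `λ_{k-1}(n)` and to `λ_k(n)` respectively. The same two facts show, by
induction on `n`, that `λ_k(n)` is not an eigenvalue for `k > n`, which truncates the range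
in (2). Finally `q f_a = Σ_b f_b + Σ_b (f_a - f_b)` reduces (3) to (1) and (2).
-/

/-- `f` belongs to the eigenspace `U_k(n,q)` of the Hamming graph `H(n,q)`,
i.e. `λ_k(n,q) · f(x) = Σ_{y ∈ N(x)} f(y)` for every vertex `x`, where
`λ_k(n,q) = n(q-1) - q·k` and `N(x)` is the set of vertices at Hamming distance 1 from `x`. -/
def inU (n q k : ℕ) (f : (Fin n → Fin q) → ℝ) : Prop :=
  ∀ x : Fin n → Fin q,
    ((n : ℝ) * ((q : ℝ) - 1) - (q : ℝ) * (k : ℝ)) * f x =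
      ∑ y ∈ Finset.univ.filter (fun y : Fin n → Fin q => hammingDist x y = 1), f y

/-- `f` belongs to the direct sum `U_{[i,j]}(n,q) = U_i(n,q) ⊕ … ⊕ U_j(n,q)`,
i.e. `f = Σ_{k=i}^{j} g_k` with `g_k ∈ U_k(n,q)`. -/
def inUIJ (n q i j : ℕ) (f : (Fin n → Fin q) → ℝ) : Prop :=
  ∃ g : ℕ → (Fin n → Fin q) → ℝ,
    (∀ k ∈ Finset.Icc i j, inU n q k (g k)) ∧ f = ∑ k ∈ Finset.Icc i j, g k

/-- The cardinality of the support of `f`. -/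
noncomputable def suppCard (n q : ℕ) (f : (Fin n → Fin q) → ℝ) : ℕ :=
  (Finset.univ.filter (fun x : Fin n → Fin q => f x ≠ 0)).card

/-- The restriction `f_k^r` of `f : Σ_q^{n+1} → ℝ` obtained by fixing the coordinate `r`
to the value `k`. -/
def restrictAt {n q : ℕ} (f : (Fin (n + 1) → Fin q) → ℝ) (r : Fin (n + 1)) (k : Fin q) :
    (Fin n → Fin q) → ℝ :=
  fun y => f (r.insertNth k y)

open Finset

lemma smul_eq_sum_add_sum_sub {ι R M : Type*} [Fintype ι] [Semiring R] [AddCommGroup M]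
    [Module R M] (φ : ι → M) (a : ι) :
    (Fintype.card ι : R) • φ a = ∑ b, φ b + ∑ b, (φ a - φ b) := by
  rw [sum_sub_distrib, sum_const, card_univ, Nat.cast_smul_eq_nsmul, add_sub_cancel]

lemma mem_of_sum_mem_of_forall_sub_mem {ι K M : Type*} [Fintype ι] [DivisionRing K] [CharZero K]
    [AddCommGroup M] [Module K M] {P : Submodule K M} {φ : ι → M} (a : ι)
    (hsum : ∑ b, φ b ∈ P) (hsub : ∀ b, φ a - φ b ∈ P) : φ a ∈ P := by
  have : Nonempty ι := ⟨a⟩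
  have hcard : (Fintype.card ι : K) ≠ 0 := Nat.cast_ne_zero.mpr Fintype.card_ne_zero
  rw [← P.smul_mem_iff hcard, smul_eq_sum_add_sum_sub]
  exact P.add_mem hsum (P.sum_mem fun b _ => hsub b)

def hammingAdj (n q : ℕ) : Module.End ℝ ((Fin n → Fin q) → ℝ) where
  toFun f x := ∑ y ∈ univ.filter (fun y => hammingDist x y = 1), f y
  map_add' f g := by ext x; simp [sum_add_distrib]
  map_smul' c f := by ext x; simp [mul_sum]

def hammingEigenvalue (n q k : ℕ) : ℝ := n * (q - 1) - q * k

lemma hammingEigenvalue_succ_succ_add_one (n q k : ℕ) :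
    hammingEigenvalue (n + 1) q (k + 1) + 1 = hammingEigenvalue n q k := by
  simp only [hammingEigenvalue]; push_cast; ring

lemma hammingEigenvalue_succ_sub (n q k : ℕ) :
    hammingEigenvalue (n + 1) q k - (q - 1) = hammingEigenvalue n q k := by
  simp only [hammingEigenvalue]; push_cast; ring

def eigenspaceIcc (n q i j : ℕ) : Submodule ℝ ((Fin n → Fin q) → ℝ) :=
  ⨆ k ∈ Icc i j, (hammingAdj n q).eigenspace (hammingEigenvalue n q k)

def restrictAtLinear {n q : ℕ} (r : Fin (n + 1)) (a : Fin q) :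
    ((Fin (n + 1) → Fin q) → ℝ) →ₗ[ℝ] (Fin n → Fin q) → ℝ :=
  LinearMap.funLeft ℝ ℝ fun y : Fin n → Fin q => (r.insertNth a y : Fin (n + 1) → Fin q)

section
variable {n q : ℕ}

@[simp]
lemma restrictAtLinear_apply (r : Fin (n + 1)) (a : Fin q) (f : (Fin (n + 1) → Fin q) → ℝ) :
    restrictAtLinear r a f = restrictAt f r a :=
  rfl

lemma hammingAdj_apply (f : (Fin n → Fin q) → ℝ) (x : Fin n → Fin q) :
    hammingAdj n q f x = ∑ y ∈ univ.filter (fun y => hammingDist x y = 1), f y :=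
  rfl

lemma inU_iff_mem_eigenspace {k : ℕ} {f : (Fin n → Fin q) → ℝ} :
    inU n q k f ↔ f ∈ (hammingAdj n q).eigenspace (hammingEigenvalue n q k) := by
  rw [Module.End.mem_eigenspace_iff, funext_iff]
  exact forall_congr' fun x => eq_comm

lemma inUIJ_iff_mem_eigenspaceIcc {i j : ℕ} {f : (Fin n → Fin q) → ℝ} :
    inUIJ n q i j f ↔ f ∈ eigenspaceIcc n q i j := by
  classical
  simp only [inUIJ, inU_iff_mem_eigenspace, eigenspaceIcc,
    Submodule.mem_iSup_finset_iff_exists_sum]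
  constructor
  · rintro ⟨g, hg, rfl⟩
    refine ⟨fun k => if hk : k ∈ Icc i j then ⟨g k, hg k hk⟩ else 0, sum_congr rfl fun k hk => ?_⟩
    simp [hk]
  · rintro ⟨μ, rfl⟩
    exact ⟨fun k => μ k, fun k _ => (μ k).2, rfl⟩

lemma eigenspaceIcc_mono {i j i' j' : ℕ} (hi : i' ≤ i) (hj : j ≤ j') :
    eigenspaceIcc n q i j ≤ eigenspaceIcc n q i' j' :=
  biSup_mono fun _ hk => Icc_subset_Icc hi hj hk

lemma eigenspace_le_eigenspaceIcc {i j k : ℕ} (hk : k ∈ Icc i j) :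
    (hammingAdj n q).eigenspace (hammingEigenvalue n q k) ≤ eigenspaceIcc n q i j :=
  le_iSup₂_of_le k hk le_rfl

lemma map_mem_of_mem_eigenspaceIcc {i j : ℕ} {P : Submodule ℝ ((Fin n → Fin q) → ℝ)}
    {φ : ((Fin (n + 1) → Fin q) → ℝ) →ₗ[ℝ] (Fin n → Fin q) → ℝ}
    (h : ∀ k ∈ Icc i j, ∀ g ∈ (hammingAdj (n + 1) q).eigenspace (hammingEigenvalue (n + 1) q k),
      φ g ∈ P)
    {f : (Fin (n + 1) → Fin q) → ℝ} (hf : f ∈ eigenspaceIcc (n + 1) q i j) : φ f ∈ P :=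
  (iSup₂_le fun k hk g hg => h k hk g hg : eigenspaceIcc (n + 1) q i j ≤ P.comap φ) hf

lemma hammingDist_insertNth (r : Fin (n + 1)) (a b : Fin q) (x y : Fin n → Fin q) :
    hammingDist (r.insertNth a x : Fin (n + 1) → Fin q) (r.insertNth b y) =
      (if a = b then 0 else 1) + hammingDist x y := by
  simp only [hammingDist, card_filter, Fin.sum_univ_succAbove _ r, Fin.insertNth_apply_same,
    Fin.insertNth_apply_succAbove]
  split_ifs <;> simp_all

lemma sum_eq_sum_sum_insertNth {M α : Type*} [AddCommMonoid M] [Fintype α] (r : Fin (n + 1))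
    (F : (Fin (n + 1) → α) → M) : ∑ y, F y = ∑ b, ∑ z, F (r.insertNth b z) := by
  rw [← Fintype.sum_prod_type']
  exact (Fintype.sum_equiv (Fin.insertNthEquiv _ r) _ _ fun _ => rfl).symm

lemma hammingAdj_apply_insertNth (f : (Fin (n + 1) → Fin q) → ℝ) (r : Fin (n + 1)) (a : Fin q)
    (x : Fin n → Fin q) :
    hammingAdj (n + 1) q f (r.insertNth a x) =
      ∑ b, restrictAt f r b x - restrictAt f r a x + hammingAdj n q (restrictAt f r a) x := by
  have line : ∀ b ≠ a, ∑ z, (if hammingDist (r.insertNth a x : Fin (n + 1) → Fin q)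
      (r.insertNth b z) = 1 then f (r.insertNth b z) else 0) = restrictAt f r b x := by
    intro b hb
    simp [hammingDist_insertNth, hb.symm, hammingDist_eq_zero, eq_comm (a := x), restrictAt]
  have slice : ∑ z, (if hammingDist (r.insertNth a x : Fin (n + 1) → Fin q)
      (r.insertNth a z) = 1 then f (r.insertNth a z) else 0) =
        hammingAdj n q (restrictAt f r a) x := by
    simp [hammingDist_insertNth, hammingAdj_apply, sum_filter, restrictAt]
  rw [hammingAdj_apply, sum_filter, sum_eq_sum_sum_insertNth r, ← add_sum_erase _ _ (mem_univ a),
    slice, sum_congr rfl fun b hb => line b (ne_of_mem_erase hb), sum_erase_eq_sub (mem_univ a)]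
  ring

lemma restrictAt_sub_mem_eigenspace {μ : ℝ} {f : (Fin (n + 1) → Fin q) → ℝ}
    (hf : f ∈ (hammingAdj (n + 1) q).eigenspace μ) (r : Fin (n + 1)) (a b : Fin q) :
    restrictAt f r a - restrictAt f r b ∈ (hammingAdj n q).eigenspace (μ + 1) := by
  rw [Module.End.mem_eigenspace_iff] at hf ⊢
  ext x
  have ha := hammingAdj_apply_insertNth f r a x
  have hb := hammingAdj_apply_insertNth f r b x
  rw [hf] at ha hb
  simp only [map_sub, Pi.sub_apply, Pi.smul_apply, smul_eq_mul] at ha hb ⊢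
  change μ * restrictAt f r a x = _ at ha
  change μ * restrictAt f r b x = _ at hb
  linarith

lemma sum_restrictAt_mem_eigenspace {μ : ℝ} {f : (Fin (n + 1) → Fin q) → ℝ}
    (hf : f ∈ (hammingAdj (n + 1) q).eigenspace μ) (r : Fin (n + 1)) :
    ∑ a, restrictAt f r a ∈ (hammingAdj n q).eigenspace (μ - (q - 1)) := by
  rw [Module.End.mem_eigenspace_iff] at hf ⊢
  ext x
  have h a : hammingAdj n q (restrictAt f r a) x =
      μ * restrictAt f r a x - ∑ b, restrictAt f r b x + restrictAt f r a x := by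
    have ha := hammingAdj_apply_insertNth f r a x
    rw [hf] at ha
    change μ * restrictAt f r a x = _ at ha
    linarith
  simp only [map_sum, Finset.sum_apply, Pi.smul_apply, smul_eq_mul, h, sum_add_distrib,
    sum_sub_distrib, ← mul_sum, sum_const, card_univ, Fintype.card_fin, nsmul_eq_mul]
  ring

lemma eigenspace_hammingAdj_eq_bot (hq : q ≠ 0) {k : ℕ} (hk : n < k) :
    (hammingAdj n q).eigenspace (hammingEigenvalue n q k) = ⊥ := by
  induction n generalizing k with
  | zero =>
    have hA : hammingAdj 0 q = 0 := LinearMap.ext fun f => funext fun x => by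
      refine (hammingAdj_apply f x).trans (sum_eq_zero fun y hy => ?_)
      simp [Subsingleton.elim x y] at hy
    have hμ : hammingEigenvalue 0 q k ≠ 0 := by
      simp [hammingEigenvalue, hq]; omega
    refine (Submodule.eq_bot_iff _).2 fun f hf => ?_
    rw [Module.End.mem_eigenspace_iff, hA, LinearMap.zero_apply, eq_comm] at hf
    exact (smul_eq_zero.1 hf).resolve_left hμ
  | succ n ih =>
    obtain ⟨k, rfl⟩ : ∃ k', k = k' + 1 := ⟨k - 1, by omega⟩
    refine (Submodule.eq_bot_iff _).2 fun f hf => ?_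
    have hrestrict a : restrictAt f 0 a = 0 := by
      refine mem_of_sum_mem_of_forall_sub_mem (K := ℝ) (P := ⊥) a ?_ fun b => ?_
      · rw [← ih (k := k + 1) (by omega), ← hammingEigenvalue_succ_sub]
        exact sum_restrictAt_mem_eigenspace hf 0
      · rw [← ih (k := k) (by omega), ← hammingEigenvalue_succ_succ_add_one]
        exact restrictAt_sub_mem_eigenspace hf 0 a b
    ext y
    simpa [restrictAt] using congrFun (hrestrict (y 0)) (Fin.removeNth 0 y)

variable {i j : ℕ} {f : (Fin (n + 1) → Fin q) → ℝ}

theorem restrictAt_sub_mem_eigenspaceIcc (hi : 1 ≤ i) (hf : f ∈ eigenspaceIcc (n + 1) q i j)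
    (r : Fin (n + 1)) (a b : Fin q) :
    restrictAt f r a - restrictAt f r b ∈ eigenspaceIcc n q (i - 1) (j - 1) := by
  refine map_mem_of_mem_eigenspaceIcc (φ := restrictAtLinear r a - restrictAtLinear r b)
    (fun k hk g hg => ?_) hf
  rw [mem_Icc] at hk
  obtain ⟨k, rfl⟩ : ∃ k', k = k' + 1 := ⟨k - 1, by omega⟩
  refine eigenspace_le_eigenspaceIcc (k := k) (mem_Icc.2 (by omega)) ?_
  rw [← hammingEigenvalue_succ_succ_add_one]
  exact restrictAt_sub_mem_eigenspace hg r a b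

theorem sum_restrictAt_mem_eigenspaceIcc (hq : q ≠ 0) (hf : f ∈ eigenspaceIcc (n + 1) q i j)
    (r : Fin (n + 1)) : ∑ a, restrictAt f r a ∈ eigenspaceIcc n q i (min j n) := by
  have key := map_mem_of_mem_eigenspaceIcc (φ := ∑ a, restrictAtLinear r a)
    (P := eigenspaceIcc n q i (min j n)) (fun k hk g hg => ?_) hf
  · simpa using key
  have hsum := sum_restrictAt_mem_eigenspace hg r
  rw [hammingEigenvalue_succ_sub] at hsum
  rw [LinearMap.sum_apply]
  rcases le_or_gt k n with hkn | hnk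
  · exact eigenspace_le_eigenspaceIcc (mem_Icc.2 (by simp at hk ⊢; omega)) hsum
  · rw [eigenspace_hammingAdj_eq_bot hq hnk, Submodule.mem_bot] at hsum
    simp [hsum]

theorem restrictAt_mem_eigenspaceIcc (hq : q ≠ 0) (hi : 1 ≤ i) (hjn : j ≤ n + 1)
    (hf : f ∈ eigenspaceIcc (n + 1) q i j) (r : Fin (n + 1)) (a : Fin q) :
    restrictAt f r a ∈ eigenspaceIcc n q (i - 1) (min j n) :=
  mem_of_sum_mem_of_forall_sub_mem a
    (eigenspaceIcc_mono (Nat.sub_le i 1) le_rfl (sum_restrictAt_mem_eigenspaceIcc hq hf r))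
    fun b => eigenspaceIcc_mono le_rfl (by omega) (restrictAt_sub_mem_eigenspaceIcc hi hf r a b)

end

theorem stmt15_general (q n i j : ℕ) (hq : 2 ≤ q) (hi : 1 ≤ i) (hjn : j ≤ n + 1)
    (f : (Fin (n + 1) → Fin q) → ℝ) (hf : inUIJ (n + 1) q i j f) (r : Fin (n + 1)) :
    (∀ k m : Fin q, inUIJ n q (i - 1) (j - 1) (restrictAt f r k - restrictAt f r m)) ∧
    inUIJ n q i (min j n) (∑ k : Fin q, restrictAt f r k) ∧
    (∀ k : Fin q, inUIJ n q (i - 1) (min j n) (restrictAt f r k)) := by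
  simp only [inUIJ_iff_mem_eigenspaceIcc] at hf ⊢
  have hq0 : q ≠ 0 := by omega
  exact ⟨restrictAt_sub_mem_eigenspaceIcc hi hf r, sum_restrictAt_mem_eigenspaceIcc hq0 hf r,
    restrictAt_mem_eigenspaceIcc hq0 hi hjn hf r⟩

/-- For `f ∈ U_{[i,j]}(n+1,q)` with `1 ≤ i ≤ j ≤ n+1` and any coordinate `r`:
(1) `f_k^r - f_m^r ∈ U_{[i-1,j-1]}(n,q)` for all `k, m ∈ Σ_q`;
(2) `Σ_{k} f_k^r ∈ U_{[i, min j n]}(n,q)` (which is `U_{[i,j]}(n,q)` when `j ≤ n`);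
(3) `f_k^r ∈ U_{[i-1, min j n]}(n,q)` for every `k ∈ Σ_q` (i.e. `U_{[i-1,j]}(n,q)`
when `j ≤ n` and `U_{[i-1,n]}(n,q)` when `j = n+1`). -/
theorem stmt15 (q n i j : ℕ) (hq : 2 ≤ q) (hi : 1 ≤ i) (hij : i ≤ j) (hjn : j ≤ n + 1)
    (f : (Fin (n + 1) → Fin q) → ℝ) (hf : inUIJ (n + 1) q i j f) (r : Fin (n + 1)) :
    (∀ k m : Fin q, inUIJ n q (i - 1) (j - 1) (restrictAt f r k - restrictAt f r m)) ∧
    inUIJ n q i (min j n) (∑ k : Fin q, restrictAt f r k) ∧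
    (∀ k : Fin q, inUIJ n q (i - 1) (min j n) (restrictAt f r k)) :=
  stmt15_general q n i j hq hi hjn f hf r
end

section
/- Let q ≥ 2, n ≥ 2, 0 ≤ i ≤ j ≤ n with j ≥ 1, let f : Σ_q^n → ℝ belong to U_{[i,j]}(n,q), let r ∈ {1,…,n}, and let m ∈ Σ_q. If f_k^r ≡ 0 for every k ∈ Σ_q \ {m}, then f_m^r belongs to U_{[i,j−1]}(n−1,q), where U_{[i,j−1]}(n−1,q) is understood to be the zero space if i > j−1. -/
/-! Splitting the neighbours of a vertex according to whether they differ in coordinate `r`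
shows that for `g ∈ U_k(n+1,q)` the slice sum `σ = Σ_c g_c^r` lies in `U_k(n,q)`, while each
`g_c^r - σ/q` lies in `U_{k-1}(n,q)`. For `f = Σ_{k=i}^{j} g_k` supported on the slice `m`, the
restriction `f_m^r` is `Σ_k σ_k`, and the vanishing of `f_{m'}^r` for some `m' ≠ m` writes `σ_j/q`
as a sum of eigenvectors for eigenvalues other than `λ_j(n,q)`; independence of eigenspaces then
forces `σ_j = 0`. -/

open Finset

theorem Module.End.eq_zero_of_add_eq_zero_of_mem_eigenspace {R M : Type*} [CommRing R]
    [IsDomain R] [AddCommGroup M] [Module R M] [IsTorsionFree R M] {f : Module.End R M} {μ : R}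
    {v w : M} (hv : v ∈ f.eigenspace μ) (hw : w ∈ ⨆ (ν) (_ : ν ≠ μ), f.eigenspace ν)
    (h : v + w = 0) : v = 0 :=
  Submodule.disjoint_def.mp (f.eigenspaces_iSupIndep μ) v hv
    (eq_neg_of_add_eq_zero_left h ▸ neg_mem hw)

namespace HammingGraph

variable {n q : ℕ}

noncomputable def adjacency (n q : ℕ) : Module.End ℝ ((Fin n → Fin q) → ℝ) where
  toFun f x := ∑ y ∈ univ.filter (fun y => hammingDist x y = 1), f y
  map_add' f g := by ext x; simp [sum_add_distrib]
  map_smul' c f := by ext x; simp [mul_sum]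

/-- `λ_k(n,q)`, with real `k` so that `λ_{k-1}` makes sense also for `k = 0`. -/
def eigenvalue (n q : ℕ) (k : ℝ) : ℝ := n * (q - 1) - q * k

theorem inU_iff_mem_eigenspace {k : ℕ} {f : (Fin n → Fin q) → ℝ} :
    inU n q k f ↔ f ∈ (adjacency n q).eigenspace (eigenvalue n q k) := by
  rw [Module.End.mem_eigenspace_iff, funext_iff]
  exact forall_congr' fun x => eq_comm

theorem hammingDist_insertNth {β : Type*} [DecidableEq β] (r : Fin (n + 1)) (a b : β)
    (x y : Fin n → β) :
    hammingDist (Fin.insertNth (α := fun _ => β) r a x) (r.insertNth b y) =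
      (if a = b then 0 else 1) + hammingDist x y := by
  simp [hammingDist, card_filter, Fin.sum_univ_succAbove _ r]

theorem restrictAt_adjacency (f : (Fin (n + 1) → Fin q) → ℝ) (r : Fin (n + 1)) (c : Fin q) :
    restrictAt (adjacency (n + 1) q f) r c =
      ∑ k ∈ univ.erase c, restrictAt f r k + adjacency n q (restrictAt f r c) := by
  ext z
  change ∑ y ∈ _, _ = _
  rw [sum_filter, ← (Fin.insertNthEquiv (fun _ => Fin q) r).sum_comp, Fintype.sum_prod_type,
    ← add_sum_erase _ _ (mem_univ c), add_comm]
  simp only [Fin.insertNthEquiv, Equiv.coe_fn_mk, hammingDist_insertNth, if_true, zero_add,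
    Pi.add_apply, Finset.sum_apply]
  congr 1
  · refine sum_congr rfl fun k hk => ?_
    simp [(ne_of_mem_erase hk).symm, hammingDist_eq_zero, restrictAt]
  · simp [adjacency, restrictAt, sum_filter]

theorem eigenvalue_succ_left (k : ℝ) : eigenvalue (n + 1) q k = eigenvalue n q k + (q - 1) := by
  simp only [eigenvalue]; push_cast; ring

theorem eigenvalue_sub_one (k : ℝ) : eigenvalue n q (k - 1) = eigenvalue n q k + q := by
  simp only [eigenvalue]; ring

theorem eigenvalue_injective (hq : q ≠ 0) : Function.Injective (eigenvalue n q) := by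
  intro a b h
  simp only [eigenvalue, sub_right_inj] at h
  exact mul_left_cancel₀ (Nat.cast_ne_zero.mpr hq) h

theorem restrictAt_sum {ι : Type*} (s : Finset ι) (g : ι → (Fin (n + 1) → Fin q) → ℝ)
    (r : Fin (n + 1)) (c : Fin q) :
    restrictAt (∑ k ∈ s, g k) r c = ∑ k ∈ s, restrictAt (g k) r c := by
  ext z
  simp [restrictAt, Finset.sum_apply]

theorem restrictAt_eq_sum_of_forall_ne {f : (Fin (n + 1) → Fin q) → ℝ} {r : Fin (n + 1)}
    {m : Fin q} (h0 : ∀ k, k ≠ m → restrictAt f r k = 0) :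
    restrictAt f r m = ∑ c, restrictAt f r c :=
  (Fintype.sum_eq_single m h0).symm

variable {k : ℕ} {f : (Fin (n + 1) → Fin q) → ℝ}

theorem adjacency_restrictAt_of_inU (hf : inU (n + 1) q k f) (r : Fin (n + 1)) (c : Fin q) :
    adjacency n q (restrictAt f r c) =
      (eigenvalue n q k + q) • restrictAt f r c - ∑ c', restrictAt f r c' := by
  have hslice := restrictAt_adjacency f r c
  rw [Module.End.mem_eigenspace_iff.mp (inU_iff_mem_eigenspace.mp hf),
    sum_erase_eq_sub (mem_univ c)] at hslice
  change eigenvalue (n + 1) q k • restrictAt f r c = _ at hslice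
  rw [eigenvalue_succ_left] at hslice
  linear_combination (norm := module) -hslice

theorem sum_restrictAt_inU (hf : inU (n + 1) q k f) (r : Fin (n + 1)) :
    inU n q k (∑ c, restrictAt f r c) := by
  rw [inU_iff_mem_eigenspace, Module.End.mem_eigenspace_iff, map_sum]
  simp only [adjacency_restrictAt_of_inU hf, sum_sub_distrib, ← smul_sum, sum_const, card_univ,
    Fintype.card_fin]
  module

theorem restrictAt_sub_mem_eigenspace (hf : inU (n + 1) q k f) (r : Fin (n + 1)) (c : Fin q) :
    restrictAt f r c - (q : ℝ)⁻¹ • ∑ c', restrictAt f r c' ∈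
      (adjacency n q).eigenspace (eigenvalue n q (k - 1)) := by
  have hq : (q : ℝ) ≠ 0 := Nat.cast_ne_zero.mpr c.pos.ne'
  have hsum := Module.End.mem_eigenspace_iff.mp
    (inU_iff_mem_eigenspace.mp (sum_restrictAt_inU hf r))
  rw [Module.End.mem_eigenspace_iff, map_sub, map_smul, hsum, adjacency_restrictAt_of_inU hf,
    eigenvalue_sub_one]
  match_scalars
  · field_simp
  · field_simp; ring

theorem sum_restrictAt_eq_zero_of_restrictAt_sum_eq_zero {s : Finset ℕ}
    {g : ℕ → (Fin (n + 1) → Fin q) → ℝ} {j : ℕ} (hg : ∀ k ∈ s, inU (n + 1) q k (g k))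
    (hj : j ∈ s) (hmax : ∀ k ∈ s, k ≤ j) (r : Fin (n + 1)) (c : Fin q)
    (h : restrictAt (∑ k ∈ s, g k) r c = 0) :
    ∑ c', restrictAt (g j) r c' = 0 := by
  have hq : q ≠ 0 := c.pos.ne'
  set σ := fun k => ∑ c', restrictAt (g k) r c'
  set δ := fun k => restrictAt (g k) r c - (q : ℝ)⁻¹ • σ k
  have hdecomp : (q : ℝ)⁻¹ • σ j + (∑ k ∈ s.erase j, (q : ℝ)⁻¹ • σ k + ∑ k ∈ s, δ k) = 0 := by
    rw [← add_assoc, add_sum_erase s (fun k => (q : ℝ)⁻¹ • σ k) hj, ← sum_add_distrib, ← h,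
      restrictAt_sum]
    exact sum_congr rfl fun k _ => add_sub_cancel _ _
  have hmem : ∑ k ∈ s.erase j, (q : ℝ)⁻¹ • σ k + ∑ k ∈ s, δ k ∈
      ⨆ (ν) (_ : ν ≠ eigenvalue n q j), (adjacency n q).eigenspace ν := by
    refine add_mem (sum_mem fun k hk => ?_) (sum_mem fun k hk => ?_)
    · refine Submodule.mem_iSup_of_mem (eigenvalue n q k) (Submodule.mem_iSup_of_mem ?_ ?_)
      · exact (eigenvalue_injective hq).ne (by exact_mod_cast ne_of_mem_erase hk)
      · exact Submodule.smul_mem _ _ (inU_iff_mem_eigenspace.mp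
          (sum_restrictAt_inU (hg k (mem_of_mem_erase hk)) r))
    · refine Submodule.mem_iSup_of_mem (eigenvalue n q (k - 1)) (Submodule.mem_iSup_of_mem ?_ ?_)
      · refine (eigenvalue_injective hq).ne ?_
        have : (k : ℝ) ≤ j := by exact_mod_cast hmax k hk
        linarith
      · exact restrictAt_sub_mem_eigenspace (hg k hk) r c
  have hσj := Module.End.eq_zero_of_add_eq_zero_of_mem_eigenspace (Submodule.smul_mem _ _
    (inU_iff_mem_eigenspace.mp (sum_restrictAt_inU (hg j hj) r))) hmem hdecomp
  exact (smul_eq_zero.mp hσj).resolve_left (inv_ne_zero (Nat.cast_ne_zero.mpr hq))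

end HammingGraph

open HammingGraph

theorem stmt16_general (q n i j : ℕ) (hq : 2 ≤ q)
    (f : (Fin (n + 1) → Fin q) → ℝ) (hf : inUIJ (n + 1) q i j f) (r : Fin (n + 1)) (m : Fin q)
    (h0 : ∀ k : Fin q, k ≠ m → restrictAt f r k = 0) :
    inUIJ n q i (j - 1) (restrictAt f r m) := by
  obtain ⟨g, hg, rfl⟩ := hf
  obtain ⟨m', hm'⟩ : ∃ m', m' ≠ m :=
    haveI := Fin.nontrivial_iff_two_le.mpr hq
    exists_ne m
  have hIcc : Icc i (j - 1) ⊆ Icc i j := Icc_subset_Icc_right (Nat.sub_le j 1)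
  refine ⟨fun k => ∑ c, restrictAt (g k) r c,
    fun k hk => sum_restrictAt_inU (hg k (hIcc hk)) r, ?_⟩
  rw [restrictAt_eq_sum_of_forall_ne h0]
  simp only [restrictAt_sum]
  rw [sum_comm]
  refine (sum_subset hIcc fun k hk hk' => ?_).symm
  obtain rfl : k = j := by simp only [mem_Icc] at hk hk'; omega
  exact sum_restrictAt_eq_zero_of_restrictAt_sum_eq_zero hg hk
    (fun k hk => (mem_Icc.mp hk).2) r m' (h0 m' hm')

/-- For `f ∈ U_{[i,j]}(n+1,q)` with `n + 1 ≥ 2`, `j ≥ 1`, a coordinate `r` and a value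
`m ∈ Σ_q`: if `f_k^r ≡ 0` for every `k ≠ m`, then `f_m^r ∈ U_{[i,j-1]}(n,q)`
(the zero space when `i > j - 1`). -/
theorem stmt16 (q n i j : ℕ) (hq : 2 ≤ q) (hn : 1 ≤ n) (hj : 1 ≤ j) (hij : i ≤ j)
    (hjn : j ≤ n + 1)
    (f : (Fin (n + 1) → Fin q) → ℝ) (hf : inUIJ (n + 1) q i j f) (r : Fin (n + 1)) (m : Fin q)
    (h0 : ∀ k : Fin q, k ≠ m → restrictAt f r k = 0) :
    inUIJ n q i (j - 1) (restrictAt f r m) :=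
  stmt16_general q n i j hq f hf r m h0
end
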